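/- Let K, f : ℕ → ℝ be nonnegative with f bounded, K positive and monotonically decreasing, and ‖K‖ := ∑_{t=0}^∞ K(t) < ∞. Suppose there exist ε > 0 and T ∈ ℕ such that ∑_{s=0}^{t} K(s)·K(t−s) ≤ 2(1+ε)‖K‖·K(t) for all t ≥ T, and suppose 2(1+ε)‖K‖ < 1. Then the function P(t) := f(t) + ∑_{j=1}^∞ (K^{*j} * f)(t) is well defined (the series converges for every t), solves the convolution Volterra equation P(t) = f(t) + (K * P)(t) for all t, and satisfies f(t) + (K*f)(t) ≤ P(t) ≤ f(t) + C·(K*f)(t) for all t, where C = (K(0)/K(T) + 1)/(1 − 2‖K‖(1+ε)). -/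

import Mathlib

/-- Discrete convolution of two sequences: `(K * f)(t) = ∑_{s=0}^{t} K s * f (t - s)`. -/
noncomputable def discConv (K f : ℕ → ℝ) (t : ℕ) : ℝ :=
  ∑ s ∈ Finset.range (t + 1), K s * f (t - s)

/-- Convolution powers, shifted by one: `convIter K n = K^{*(n+1)}`, i.e.
`convIter K 0 = K^{*1} = K` and `K^{*(n+2)} = K * K^{*(n+1)}`. -/
noncomputable def convIter (K : ℕ → ℝ) : ℕ → ℕ → ℝ
  | 0 => K
  | n + 1 => discConv K (convIter K n)

/-! Write `c = 2(1+ε)‖K‖` and `B = K 0 / K T`. The key estimate is `K^{*(j+1)} ≤ B c^j K`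
pointwise. Past `T` it passes from `j` to `j + 1` by Kesten's inequality `K * K ≤ c K`; before `T`
one uses instead `K^{*(j+1)} ≤ c^j K 0`, which propagates because `‖K‖ ≤ c`, itself forced by
Kesten's inequality since `K * K (t) ≥ K t ∑_{s ≤ t} K s` for antitone `K`. Summing the geometric
bound gives convergence and the upper estimate; the Volterra equation is associativity of
convolution, i.e. of multiplication of power series. -/

noncomputable def neumannSeries (K f : ℕ → ℝ) (t : ℕ) : ℝ :=
  f t + ∑' j, discConv (convIter K j) f t

section Convolution

variable {K L f g : ℕ → ℝ}

theorem discConv_eq_coeff_mul (K f : ℕ → ℝ) (t : ℕ) :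
    discConv K f t = PowerSeries.coeff t (PowerSeries.mk K * PowerSeries.mk f) := by
  rw [PowerSeries.coeff_mul, discConv,
    ← Finset.Nat.sum_antidiagonal_eq_sum_range_succ (fun i j => K i * f j)]
  simp only [PowerSeries.coeff_mk]

theorem mk_discConv (K f : ℕ → ℝ) :
    PowerSeries.mk (discConv K f) = PowerSeries.mk K * PowerSeries.mk f :=
  PowerSeries.ext fun t => by rw [PowerSeries.coeff_mk, discConv_eq_coeff_mul]

theorem discConv_assoc (K L f : ℕ → ℝ) :
    discConv (discConv K L) f = discConv K (discConv L f) := by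
  funext t
  rw [discConv_eq_coeff_mul, discConv_eq_coeff_mul, mk_discConv, mk_discConv, mul_assoc]

theorem discConv_nonneg (hK : ∀ t, 0 ≤ K t) (hf : ∀ t, 0 ≤ f t) (t : ℕ) :
    0 ≤ discConv K f t :=
  Finset.sum_nonneg fun s _ => mul_nonneg (hK s) (hf _)

theorem convIter_nonneg (hK : ∀ t, 0 ≤ K t) : ∀ j t, 0 ≤ convIter K j t
  | 0, t => hK t
  | j + 1, t => discConv_nonneg hK (convIter_nonneg hK j) t

theorem discConv_le_discConv (hKL : ∀ t, K t ≤ L t) (hfg : ∀ t, f t ≤ g t)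
    (hL : ∀ t, 0 ≤ L t) (hf : ∀ t, 0 ≤ f t) (t : ℕ) :
    discConv K f t ≤ discConv L g t :=
  Finset.sum_le_sum fun s _ => mul_le_mul (hKL s) (hfg _) (hf _) (hL s)

theorem discConv_const_mul_left (M : ℝ) (K f : ℕ → ℝ) (t : ℕ) :
    discConv (fun u => M * K u) f t = M * discConv K f t := by
  rw [discConv, discConv, Finset.mul_sum]
  exact Finset.sum_congr rfl fun s _ => mul_assoc _ _ _

theorem discConv_const_mul_right (M : ℝ) (K f : ℕ → ℝ) (t : ℕ) :
    discConv K (fun u => M * f u) t = M * discConv K f t := by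
  rw [discConv, discConv, Finset.mul_sum]
  exact Finset.sum_congr rfl fun s _ => mul_left_comm _ _ _

theorem discConv_le_tsum_mul (hK : ∀ t, 0 ≤ K t) (hKsum : Summable K) {M : ℝ} (hM : 0 ≤ M)
    {t : ℕ} (hf : ∀ u ≤ t, f u ≤ M) :
    discConv K f t ≤ (∑' u, K u) * M :=
  calc discConv K f t ≤ ∑ s ∈ Finset.range (t + 1), K s * M :=
        Finset.sum_le_sum fun s _ => mul_le_mul_of_nonneg_left (hf _ (Nat.sub_le t s)) (hK s)
    _ = (∑ s ∈ Finset.range (t + 1), K s) * M := (Finset.sum_mul _ _ _).symm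
    _ ≤ (∑' u, K u) * M :=
        mul_le_mul_of_nonneg_right (hKsum.sum_le_tsum _ fun i _ => hK i) hM

theorem mul_sum_range_le_discConv_self (hK : ∀ t, 0 ≤ K t) (hKmono : Antitone K) (t : ℕ) :
    K t * ∑ s ∈ Finset.range (t + 1), K s ≤ discConv K K t := by
  rw [Finset.mul_sum]
  exact Finset.sum_le_sum fun s _ => by
    rw [mul_comm]
    exact mul_le_mul_of_nonneg_left (hKmono (Nat.sub_le t s)) (hK s)

theorem neumannSeries_eq_add_discConv
    (hsumm : ∀ t, Summable fun j => discConv (convIter K j) f t) (t : ℕ) :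
    neumannSeries K f t = f t + discConv K (neumannSeries K f) t := by
  have hK_conv : discConv K (neumannSeries K f) t
      = discConv K f t + ∑' j, discConv (convIter K (j + 1)) f t := by
    rw [discConv]
    simp only [neumannSeries, mul_add, Finset.sum_add_distrib, ← tsum_mul_left]
    rw [← Summable.tsum_finsetSum fun s _ => (hsumm (t - s)).mul_left (K s)]
    congr 1
    refine tsum_congr fun j => ?_
    rw [convIter, discConv_assoc]
    rfl
  rw [hK_conv, neumannSeries, (hsumm t).tsum_eq_zero_add]
  rfl

end Convolution

section Kesten

variable {K : ℕ → ℝ} {T : ℕ} {c : ℝ}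

theorem tsum_le_of_discConv_self_le (hKpos : ∀ t, 0 < K t) (hKmono : Antitone K)
    (hKsum : Summable K) (hkesten : ∀ t, T ≤ t → discConv K K t ≤ c * K t) :
    ∑' u, K u ≤ c := by
  have hpartial : ∀ t, T ≤ t → ∑ s ∈ Finset.range (t + 1), K s ≤ c := fun t ht =>
    le_of_mul_le_mul_left
      (by linarith [mul_sum_range_le_discConv_self (fun u => (hKpos u).le) hKmono t,
        hkesten t ht])
      (hKpos t)
  exact le_of_tendsto' ((Filter.tendsto_add_atTop_iff_nat (T + 1)).2 hKsum.hasSum.tendsto_sum_nat)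
    fun n => hpartial (n + T) (Nat.le_add_left T n)

theorem convIter_le_pow_mul_of_lt (hK : ∀ t, 0 ≤ K t) (hKmono : Antitone K)
    (hKsum : Summable K) (hc : ∑' u, K u ≤ c) :
    ∀ j t, t < T → convIter K j t ≤ c ^ j * K 0
  | 0, t, _ => by
    rw [pow_zero, one_mul]
    exact hKmono (Nat.zero_le t)
  | j + 1, t, ht => by
    have hM : 0 ≤ c ^ j * K 0 := mul_nonneg (pow_nonneg ((tsum_nonneg hK).trans hc) j) (hK 0)
    calc convIter K (j + 1) t ≤ (∑' u, K u) * (c ^ j * K 0) :=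
          discConv_le_tsum_mul hK hKsum hM fun u hu =>
            convIter_le_pow_mul_of_lt hK hKmono hKsum hc j u (hu.trans_lt ht)
      _ ≤ c * (c ^ j * K 0) := mul_le_mul_of_nonneg_right hc hM
      _ = c ^ (j + 1) * K 0 := by ring

theorem le_div_mul_of_antitone (hKpos : ∀ t, 0 < K t) (hKmono : Antitone K) {t : ℕ} (ht : t ≤ T) :
    K 0 ≤ K 0 / K T * K t :=
  calc K 0 = K 0 / K T * K T := (div_mul_cancel₀ _ (hKpos T).ne').symm
    _ ≤ K 0 / K T * K t :=
        mul_le_mul_of_nonneg_left (hKmono ht) (div_nonneg (hKpos 0).le (hKpos T).le)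

theorem convIter_le_pow_mul (hKpos : ∀ t, 0 < K t) (hKmono : Antitone K) (hKsum : Summable K)
    (hkesten : ∀ t, T ≤ t → discConv K K t ≤ c * K t) :
    ∀ j t, convIter K j t ≤ K 0 / K T * c ^ j * K t := by
  have hK : ∀ t, 0 ≤ K t := fun t => (hKpos t).le
  have hc : ∑' u, K u ≤ c := tsum_le_of_discConv_self_le hKpos hKmono hKsum hkesten
  have hc0 : 0 ≤ c := (tsum_nonneg hK).trans hc
  have hB : 1 ≤ K 0 / K T := (one_le_div (hKpos T)).2 (hKmono (Nat.zero_le T))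
  intro j
  induction j with
  | zero =>
    intro t
    rw [pow_zero, mul_one]
    exact le_mul_of_one_le_left (hK t) hB
  | succ j ih =>
    intro t
    rcases le_or_gt T t with hTt | htT
    · calc convIter K (j + 1) t
            ≤ discConv K (fun u => K 0 / K T * c ^ j * K u) t :=
            discConv_le_discConv (fun _ => le_rfl) ih hK (convIter_nonneg hK j) t
        _ = K 0 / K T * c ^ j * discConv K K t := discConv_const_mul_right _ _ _ _
        _ ≤ K 0 / K T * c ^ j * (c * K t) :=
            mul_le_mul_of_nonneg_left (hkesten t hTt)
              (mul_nonneg (zero_le_one.trans hB) (pow_nonneg hc0 j))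
        _ = K 0 / K T * c ^ (j + 1) * K t := by ring
    · calc convIter K (j + 1) t ≤ c ^ (j + 1) * K 0 :=
            convIter_le_pow_mul_of_lt hK hKmono hKsum hc (j + 1) t htT
        _ ≤ c ^ (j + 1) * (K 0 / K T * K t) :=
            mul_le_mul_of_nonneg_left (le_div_mul_of_antitone hKpos hKmono htT.le)
              (pow_nonneg hc0 _)
        _ = K 0 / K T * c ^ (j + 1) * K t := by ring

end Kesten

section Neumann

variable {K f : ℕ → ℝ} {B c : ℝ}

theorem discConv_convIter_le (hK : ∀ t, 0 ≤ K t) (hf : ∀ t, 0 ≤ f t) (hB : 0 ≤ B)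
    (hc : 0 ≤ c) (hconv : ∀ j t, convIter K j t ≤ B * c ^ j * K t) (j t : ℕ) :
    discConv (convIter K j) f t ≤ B * c ^ j * discConv K f t :=
  calc discConv (convIter K j) f t ≤ discConv (fun u => B * c ^ j * K u) f t :=
        discConv_le_discConv (hconv j) (fun _ => le_rfl)
          (fun u => mul_nonneg (mul_nonneg hB (pow_nonneg hc j)) (hK u)) hf t
    _ = B * c ^ j * discConv K f t := discConv_const_mul_left _ _ _ _

theorem summable_discConv_convIter (hK : ∀ t, 0 ≤ K t) (hf : ∀ t, 0 ≤ f t)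
    (hB : 0 ≤ B) (hc₀ : 0 ≤ c) (hc₁ : c < 1)
    (hconv : ∀ j t, convIter K j t ≤ B * c ^ j * K t) (t : ℕ) :
    Summable fun j => discConv (convIter K j) f t :=
  .of_nonneg_of_le (fun j => discConv_nonneg (convIter_nonneg hK j) hf t)
    (discConv_convIter_le hK hf hB hc₀ hconv · t)
    (((summable_geometric_of_lt_one hc₀ hc₁).mul_left B).mul_right _)

theorem tsum_discConv_convIter_le (hK : ∀ t, 0 ≤ K t) (hf : ∀ t, 0 ≤ f t)
    (hB : 0 ≤ B) (hc₀ : 0 ≤ c) (hc₁ : c < 1)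
    (hconv : ∀ j t, convIter K j t ≤ B * c ^ j * K t) (t : ℕ) :
    ∑' j, discConv (convIter K j) f t ≤ B / (1 - c) * discConv K f t :=
  calc ∑' j, discConv (convIter K j) f t ≤ ∑' j, B * c ^ j * discConv K f t :=
        Summable.tsum_le_tsum (discConv_convIter_le hK hf hB hc₀ hconv · t)
          (summable_discConv_convIter hK hf hB hc₀ hc₁ hconv t)
          (((summable_geometric_of_lt_one hc₀ hc₁).mul_left B).mul_right _)
    _ = B / (1 - c) * discConv K f t := by
        rw [tsum_mul_right, tsum_mul_left, tsum_geometric_of_lt_one hc₀ hc₁, div_eq_mul_inv]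

theorem discConv_le_tsum_discConv_convIter (hK : ∀ t, 0 ≤ K t) (hf : ∀ t, 0 ≤ f t) {t : ℕ}
    (hsumm : Summable fun j => discConv (convIter K j) f t) :
    discConv K f t ≤ ∑' j, discConv (convIter K j) f t :=
  hsumm.le_tsum 0 fun j _ => discConv_nonneg (convIter_nonneg hK j) hf t

end Neumann

theorem volterra_nonasymptotic_bound_general (K f : ℕ → ℝ)
    (hfnonneg : ∀ t, 0 ≤ f t)
    (hKpos : ∀ t, 0 < K t) (hKmono : Antitone K) (hKsum : Summable K)
    (ε : ℝ) (T : ℕ)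
    (hkesten : ∀ t, T ≤ t →
      ∑ s ∈ Finset.range (t + 1), K s * K (t - s) ≤ 2 * (1 + ε) * (∑' u, K u) * K t)
    (hnorm : 2 * (1 + ε) * (∑' u, K u) < 1) :
    let P : ℕ → ℝ := fun t => f t + ∑' j : ℕ, discConv (convIter K j) f t
    (∀ t, Summable (fun j : ℕ => discConv (convIter K j) f t)) ∧
    (∀ t, P t = f t + discConv K P t) ∧
    (∀ t, f t + discConv K f t ≤ P t ∧
      P t ≤ f t + (K 0 / K T + 1) / (1 - 2 * (∑' u, K u) * (1 + ε)) * discConv K f t) := by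
  intro P
  set c := 2 * (1 + ε) * ∑' u, K u
  have hK : ∀ t, 0 ≤ K t := fun t => (hKpos t).le
  have hB : 0 ≤ K 0 / K T := div_nonneg (hK 0) (hK T)
  have hc₀ : 0 ≤ c :=
    (tsum_nonneg hK).trans (tsum_le_of_discConv_self_le hKpos hKmono hKsum hkesten)
  have hconv := convIter_le_pow_mul hKpos hKmono hKsum hkesten
  have hsumm := summable_discConv_convIter hK hfnonneg hB hc₀ hnorm hconv
  refine ⟨hsumm, neumannSeries_eq_add_discConv hsumm, fun t => ⟨?_, ?_⟩⟩
  · exact add_le_add_right (discConv_le_tsum_discConv_convIter hK hfnonneg (hsumm t)) _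
  · have hden : 1 - 2 * (∑' u, K u) * (1 + ε) = 1 - c := by ring
    refine add_le_add_right
      ((tsum_discConv_convIter_le hK hfnonneg hB hc₀ hnorm hconv t).trans ?_) _
    rw [hden]
    exact mul_le_mul_of_nonneg_right
      (div_le_div_of_nonneg_right (le_add_of_nonneg_right zero_le_one) (by linarith))
      (discConv_nonneg hK hfnonneg t)

/-- **Non-asymptotic Volterra bound.** Under Kesten's condition and the convergence
threshold `2(1+ε)‖K‖ < 1`, the Neumann series `P = f + ∑_{j=1}^∞ K^{*j} * f` converges
pointwise, solves the convolution Volterra equation `P = f + K * P`, and is trapped between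
`f + K*f` and `f + C (K*f)` with `C = (K 0 / K T + 1)/(1 - 2‖K‖(1+ε))`. -/
theorem volterra_nonasymptotic_bound (K f : ℕ → ℝ)
    (hfnonneg : ∀ t, 0 ≤ f t) (hfbdd : ∃ Cf : ℝ, ∀ t, f t ≤ Cf)
    (hKpos : ∀ t, 0 < K t) (hKmono : Antitone K) (hKsum : Summable K)
    (ε : ℝ) (hε : 0 < ε) (T : ℕ)
    (hkesten : ∀ t, T ≤ t →
      ∑ s ∈ Finset.range (t + 1), K s * K (t - s) ≤ 2 * (1 + ε) * (∑' u, K u) * K t)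
    (hnorm : 2 * (1 + ε) * (∑' u, K u) < 1) :
    let P : ℕ → ℝ := fun t => f t + ∑' j : ℕ, discConv (convIter K j) f t
    (∀ t, Summable (fun j : ℕ => discConv (convIter K j) f t)) ∧
    (∀ t, P t = f t + discConv K P t) ∧
    (∀ t, f t + discConv K f t ≤ P t ∧
      P t ≤ f t + (K 0 / K T + 1) / (1 - 2 * (∑' u, K u) * (1 + ε)) * discConv K f t) :=
  volterra_nonasymptotic_bound_general K f hfnonneg hKpos hKmono hKsum ε T hkesten hnorm
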